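/- arXiv:1208.2656 — 2 statements merged into one kernel-verified Lean document; each statement's English description precedes it below -/
import Mathlib

section
/- For the signal f(t) = cos(ω t) + cos((3/2)ω t) with ω > 0, t = 0 is a local maximum of f, and p₁ = (2/ω)(π - arctan(√(25 - 2√10)/(1 + √10))) is a critical point of f, i.e., f'(p₁) = 0. -/
/-!
Since both cosines are at most `1` and equal `1` at `t = 0`, the origin is a global maximum.
Writing `p = (2/ω)(π - θ)`, one has `ω p = 2π - 2θ` and `(3/2) ω p = 3π - 3θ`, so
`f'(p) = ω sin θ (3/2 + 2 cos θ - 6 cos² θ)`. The arctangent in `p₁` is `arccos c` with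
`c = (1 + √10)/6`, the positive root of `12 c² - 4 c - 3 = 0`, so the last factor vanishes.
-/

open Real

section CosSum

variable (a b : ℝ)

lemma isLocalMax_cos_mul_add_cos_mul_zero :
    IsLocalMax (fun t : ℝ => cos (a * t) + cos (b * t)) 0 :=
  Filter.Eventually.of_forall fun t => by
    simp only [mul_zero, cos_zero]
    linarith [cos_le_one (a * t), cos_le_one (b * t)]

lemma hasDerivAt_cos_mul_add_cos_mul (t : ℝ) :
    HasDerivAt (fun t : ℝ => cos (a * t) + cos (b * t))
      (-(a * sin (a * t)) - b * sin (b * t)) t :=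
  (((hasDerivAt_id' t).const_mul a).cos.add ((hasDerivAt_id' t).const_mul b).cos).congr_deriv
    (by ring)

end CosSum

lemma deriv_cos_add_cos_three_halves_two_div_mul_pi_sub {ω : ℝ} (hω : ω ≠ 0) (θ : ℝ) :
    deriv (fun t : ℝ => cos (ω * t) + cos ((3 / 2) * ω * t)) ((2 / ω) * (π - θ)) =
      ω * sin θ * (3 / 2 + 2 * cos θ - 6 * cos θ ^ 2) := by
  have h₁ : ω * ((2 / ω) * (π - θ)) = 2 * π - 2 * θ := by field_simp
  have h₂ : (3 / 2) * ω * ((2 / ω) * (π - θ)) = π - 3 * θ + 2 * π := by field_simp; ring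
  rw [(hasDerivAt_cos_mul_add_cos_mul _ _ _).deriv, h₁, h₂, sin_add_two_pi, sin_pi_sub,
    sin_two_pi_sub, sin_two_mul, sin_three_mul]
  linear_combination (6 * ω * sin θ) * sin_sq_add_cos_sq θ

lemma arctan_sqrt_div_one_add_sqrt_ten :
    arctan (√(25 - 2 * √10) / (1 + √10)) = arccos ((1 + √10) / 6) := by
  have h10 : √10 ^ 2 = 10 := sq_sqrt (by norm_num)
  have hpos : 0 < 1 + √10 := by positivity
  have hsq : 1 - ((1 + √10) / 6) ^ 2 = (25 - 2 * √10) / 6 ^ 2 := by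
    linear_combination (-1 / 36 : ℝ) * h10
  rw [arccos_eq_arctan (by positivity), hsq, sqrt_div' _ (by positivity : (0 : ℝ) ≤ 6 ^ 2),
    sqrt_sq (by norm_num : (0 : ℝ) ≤ 6), div_div_div_cancel_right₀ (by norm_num)]

theorem stmt_13 (ω : ℝ) (hω : 0 < ω) :
    IsLocalMax (fun t : ℝ => Real.cos (ω * t) + Real.cos ((3 / 2) * ω * t)) 0 ∧
    deriv (fun t : ℝ => Real.cos (ω * t) + Real.cos ((3 / 2) * ω * t))
      ((2 / ω) * (Real.pi -
        Real.arctan (Real.sqrt (25 - 2 * Real.sqrt 10) / (1 + Real.sqrt 10)))) = 0 := by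
  refine ⟨isLocalMax_cos_mul_add_cos_mul_zero _ _, ?_⟩
  have h10 : √10 ^ 2 = 10 := sq_sqrt (by norm_num)
  have hc : cos (arccos ((1 + √10) / 6)) = (1 + √10) / 6 := by
    refine cos_arccos ?_ ?_ <;> nlinarith [sqrt_nonneg 10]
  rw [deriv_cos_add_cos_three_halves_two_div_mul_pi_sub hω.ne', arctan_sqrt_div_one_add_sqrt_ten,
    hc]
  linear_combination (-ω * sin (arccos ((1 + √10) / 6)) / 6) * h10
end

section
/- For the signal f(t) = cos(ω t) + cos((3/2)ω t) with ω > 0, the point q₀ = (2/ω) arctan(√(25 + 2√10)/(√10 - 1)) is a critical point of f: ω sin(ω q₀) + (3ω/2) sin((3/2)ω q₀) = 0. -/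
theorem stmt_14 (ω : ℝ) (hω : 0 < ω)
    (q₀ : ℝ)
    (hq₀ : q₀ = (2 / ω) * Real.arctan (Real.sqrt (25 + 2 * Real.sqrt 10) / (Real.sqrt 10 - 1))) :
    ω * Real.sin (ω * q₀) + (3 * ω / 2) * Real.sin ((3 / 2) * ω * q₀) = 0 := by
  have h10 : Real.sqrt 10 ^ 2 = 10 := Real.sq_sqrt (by norm_num)
  have h10ge : Real.sqrt 10 ≥ 3 := by
    nlinarith [Real.sqrt_nonneg 10]
  have hvsq : Real.sqrt (25 + 2 * Real.sqrt 10) ^ 2 = 25 + 2 * Real.sqrt 10 :=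
    Real.sq_sqrt (by nlinarith [Real.sqrt_nonneg 10])
  set v : ℝ := Real.sqrt (25 + 2 * Real.sqrt 10) / (Real.sqrt 10 - 1) with hv
  set a : ℝ := Real.arctan v with ha
  have hdpos : 0 < Real.sqrt 10 - 1 := by nlinarith
  have hden : Real.sqrt 10 - 1 ≠ 0 := ne_of_gt hdpos
  have h1v : 1 + v ^ 2 = (6 / (Real.sqrt 10 - 1)) ^ 2 := by
    rw [hv]
    field_simp
    nlinarith
  have hcos : Real.cos a = (Real.sqrt 10 - 1) / 6 := by
    have := Real.cos_arctan v
    rw [← ha] at this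
    rw [this]
    rw [show (1 : ℝ) + v ^ 2 = (6 / (Real.sqrt 10 - 1)) ^ 2 by exact h1v]
    rw [Real.sqrt_sq (le_of_lt (div_pos (by norm_num) hdpos))]
    field_simp
  have hssq : Real.sin a ^ 2 = 1 - Real.cos a ^ 2 := Real.sin_sq a
  have hq : ω * q₀ = 2 * a := by
    rw [hq₀]; field_simp
  have hq3 : (3 / 2) * ω * q₀ = 3 * a := by
    rw [hq₀]; field_simp
  rw [hq, hq3, Real.sin_two_mul, Real.sin_three_mul]
  have hk : 2 * Real.cos a + 9 / 2 - 6 * Real.sin a ^ 2 = 0 := by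
    rw [hssq, hcos]
    linear_combination (1 / 6) * h10
  linear_combination (ω * Real.sin a) * hk
end
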